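/- Let m, n ∈ ℕ. (1) If m+1 does not divide n+1, then there is an (m+1)-step inductive formula that is not (n+1)-step inductive. (2) If m > n, then there is an (m+1)-inductive formula that is not (n+1)-inductive. -/

import Mathlib

open FirstOrder Language

/-! ### The language `L_OR = {0, 1, +, ×, <}` of ordered rings -/

/-- Function symbols of the language of ordered rings. -/
inductive LorFunc : ℕ → Type
  | zero : LorFunc 0
  | one : LorFunc 0
  | add : LorFunc 2
  | mul : LorFunc 2

/-- Relation symbols of the language of ordered rings: just `<`. -/
inductive LorRel : ℕ → Type
  | lt : LorRel 2

/-- The first-order language of ordered rings. -/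
def Lor : Language := ⟨LorFunc, LorRel⟩

/-- The term `0`. -/
def zeroT {α : Type} : Lor.Term α := Constants.term LorFunc.zero

/-- The term `1`. -/
def oneT {α : Type} : Lor.Term α := Constants.term LorFunc.one

/-- Addition of terms. -/
def addT {α : Type} (t u : Lor.Term α) : Lor.Term α := Functions.apply₂ LorFunc.add t u

/-- Multiplication of terms. -/
def mulT {α : Type} (t u : Lor.Term α) : Lor.Term α := Functions.apply₂ LorFunc.mul t u

/-- The term `2`, an abbreviation for `1 + 1`. -/
def twoT {α : Type} : Lor.Term α := addT oneT oneT

/-- The numeral `k`, i.e. the closed term `(⋯((0+1)+1)+⋯+1)` with `k` ones. -/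
def numT {α : Type} : ℕ → Lor.Term α
  | 0 => zeroT
  | n + 1 => addT (numT n) oneT

/-- The bounded formula `t < u`. -/
def ltBF {α : Type} {n : ℕ} (t u : Lor.Term (α ⊕ Fin n)) : Lor.BoundedFormula α n :=
  Relations.boundedFormula₂ LorRel.lt t u

/-- The formula `t < u`. -/
def ltFml {α : Type} (t u : Lor.Term α) : Lor.Formula α :=
  Relations.formula₂ LorRel.lt t u

/-- The formula `t ≤ u`, an abbreviation for `t < u ∨ t = u`. -/
def leFml {α : Type} (t u : Lor.Term α) : Lor.Formula α :=
  ltFml t u ⊔ Term.equal t u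

/-! ### The base theory `PA⁻` -/

/-- `PA⁻`, the theory of non-negative parts of discretely ordered rings. -/
def PAminus : Lor.Theory :=
  { -- (P1) associativity of +
    ∀' ∀' ∀' (addT (addT &0 &1) &2 =' addT &0 (addT &1 &2)),
    -- (P2) commutativity of +
    ∀' ∀' (addT &0 &1 =' addT &1 &0),
    -- (P3) associativity of ×
    ∀' ∀' ∀' (mulT (mulT &0 &1) &2 =' mulT &0 (mulT &1 &2)),
    -- (P4) commutativity of ×
    ∀' ∀' (mulT &0 &1 =' mulT &1 &0),
    -- (P5) distributivity
    ∀' ∀' ∀' (mulT &0 (addT &1 &2) =' addT (mulT &0 &1) (mulT &0 &2)),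
    -- (P6) x + 0 = x
    ∀' (addT &0 zeroT =' &0),
    -- (P7) x × 0 = 0
    ∀' (mulT &0 zeroT =' zeroT),
    -- (P8) x × 1 = x
    ∀' (mulT &0 oneT =' &0),
    -- (P9) transitivity of <
    ∀' ∀' ∀' (ltBF &0 &1 ⊓ ltBF &1 &2 ⟹ ltBF &0 &2),
    -- (P10) irreflexivity of <
    ∀' ∼(ltBF &0 &0),
    -- (P11) linearity of <
    ∀' ∀' (ltBF &0 &1 ⊔ &0 =' &1 ⊔ ltBF &1 &0),
    -- (P12) x < y → x + z < y + z
    ∀' ∀' ∀' (ltBF &0 &1 ⟹ ltBF (addT &0 &2) (addT &1 &2)),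
    -- (P13) z ≠ 0 ∧ x < y → x × z < y × z
    ∀' ∀' ∀' (∼(&2 =' zeroT) ⊓ ltBF &0 &1 ⟹ ltBF (mulT &0 &2) (mulT &1 &2)),
    -- (P14) x < y ↔ ∃z ((x + z) + 1 = y)
    ∀' ∀' (ltBF &0 &1 ⇔ ∃' (addT (addT &0 &2) oneT =' &1)),
    -- (P15) 0 < 1 ∧ (x > 0 → x ≥ 1)
    ltBF zeroT oneT ⊓ ∀' (ltBF zeroT &0 ⟹ ltBF oneT &0 ⊔ oneT =' &0),
    -- (P16) x ≥ 0
    ∀' (ltBF zeroT &0 ⊔ zeroT =' &0) }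

/-! ### Formulas `θ(x, z̄)` with a distinguished variable `x` and parameters `z̄`

A formula `θ(x, z̄)` with `m` parameters `z̄` and a distinguished induction
variable `x` is represented as `θ : Lor.Formula (Fin m ⊕ Fin 1)`, where the
`Fin m` component gives the parameters and the `Fin 1` component gives `x`. -/

/-- The distinguished variable `x` as a term. -/
def xT {m : ℕ} : Lor.Term (Fin m ⊕ Fin 1) := Term.var (Sum.inr 0)

/-- `θ(t, z̄)`, where `t` is a term possibly involving `x` and the parameters. -/
def substX {m : ℕ} (θ : Lor.Formula (Fin m ⊕ Fin 1)) (t : Lor.Term (Fin m ⊕ Fin 1)) :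
    Lor.Formula (Fin m ⊕ Fin 1) :=
  θ.subst (Sum.elim (fun i => Term.var (Sum.inl i)) fun _ => t)

/-- `θ(t, z̄)` where `t` is a term in the parameters only. -/
def substP {m : ℕ} (θ : Lor.Formula (Fin m ⊕ Fin 1)) (t : Lor.Term (Fin m)) :
    Lor.Formula (Fin m) :=
  θ.subst (Sum.elim (fun i => Term.var i) fun _ => t)

/-- `∀x θ(x, z̄)`. -/
noncomputable def allX {m : ℕ} (θ : Lor.Formula (Fin m ⊕ Fin 1)) : Lor.Formula (Fin m) :=
  Formula.iAlls (Fin 1) θ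

/-- The universal closure of a formula, as a sentence. -/
noncomputable def closeAll {α : Type} [Finite α] (φ : Lor.Formula α) : Lor.Sentence :=
  Formula.iAlls α (φ.relabel (Sum.inr : α → Empty ⊕ α))

/-- `∀x' < x, θ(x', z̄)`, a formula with free variable `x` (and parameters). -/
noncomputable def allLtX {m : ℕ} (θ : Lor.Formula (Fin m ⊕ Fin 1)) :
    Lor.Formula (Fin m ⊕ Fin 1) :=
  Formula.iAlls (Fin 1)
    (ltFml (Term.var (Sum.inr 0)) (Term.var (Sum.inl (Sum.inr 0))) ⟹
      θ.relabel (Sum.elim (fun i => Sum.inl (Sum.inl i)) fun _ => Sum.inr 0))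

/-- `∀x' ≤ x, θ(x', z̄)`, a formula with free variable `x` (and parameters). -/
noncomputable def allLeX {m : ℕ} (θ : Lor.Formula (Fin m ⊕ Fin 1)) :
    Lor.Formula (Fin m ⊕ Fin 1) :=
  Formula.iAlls (Fin 1)
    (leFml (Term.var (Sum.inr 0)) (Term.var (Sum.inl (Sum.inr 0))) ⟹
      θ.relabel (Sum.elim (fun i => Sum.inl (Sum.inl i)) fun _ => Sum.inr 0))

/-- The conjunction `⋀_{k<j} θ(k, z̄)`. -/
def conjNum {m : ℕ} (θ : Lor.Formula (Fin m ⊕ Fin 1)) : ℕ → Lor.Formula (Fin m)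
  | 0 => ⊤
  | j + 1 => conjNum θ j ⊓ substP θ (numT j)

/-- The conjunction `⋀_{k<j} θ(x+k, z̄)`. -/
def conjShift {m : ℕ} (θ : Lor.Formula (Fin m ⊕ Fin 1)) : ℕ → Lor.Formula (Fin m ⊕ Fin 1)
  | 0 => ⊤
  | j + 1 => conjShift θ j ⊓ substX θ (addT xT (numT j))

/-! ### Induction axioms -/

/-- The induction axiom `I_x θ`:
`∀z̄( θ(0,z̄) ∧ ∀x(θ(x,z̄) → θ(x+1,z̄)) → ∀x θ(x,z̄) )`. -/
noncomputable def indAx {m : ℕ} (θ : Lor.Formula (Fin m ⊕ Fin 1)) : Lor.Sentence :=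
  closeAll ((substP θ zeroT ⊓ allX (θ ⟹ substX θ (addT xT oneT))) ⟹ allX θ)

/-- The `<`-induction axiom `I^<_x θ`:
`∀z̄( ∀y(∀x<y θ(x,z̄) → θ(y,z̄)) → ∀x θ(x,z̄) )`. -/
noncomputable def indLtAx {m : ℕ} (θ : Lor.Formula (Fin m ⊕ Fin 1)) : Lor.Sentence :=
  closeAll (allX (allLtX θ ⟹ θ) ⟹ allX θ)

/-- The `(n+1)`-step induction axiom `I^{(n+1)-step}_x θ`:
`∀z̄( ⋀_{k<n+1} θ(k,z̄) ∧ ∀x(θ(x,z̄) → θ(x+n+1,z̄)) → ∀x θ(x,z̄) )`. -/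
noncomputable def indStepAx {m : ℕ} (n : ℕ) (θ : Lor.Formula (Fin m ⊕ Fin 1)) : Lor.Sentence :=
  closeAll ((conjNum θ (n + 1) ⊓ allX (θ ⟹ substX θ (addT xT (numT (n + 1))))) ⟹ allX θ)

/-- The `(n+1)`-induction axiom `I^{n+1}_x θ`:
`∀z̄( ⋀_{k<n+1} θ(k,z̄) ∧ ∀x(⋀_{k<n+1} θ(x+k,z̄) → θ(x+n+1,z̄)) → ∀x θ(x,z̄) )`. -/
noncomputable def indKAx {m : ℕ} (n : ℕ) (θ : Lor.Formula (Fin m ⊕ Fin 1)) : Lor.Sentence :=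
  closeAll ((conjNum θ (n + 1) ⊓ allX (conjShift θ (n + 1) ⟹ substX θ (addT xT (numT (n + 1))))) ⟹
    allX θ)

/-- The polynomial induction axiom `I^p_x θ`:
`∀z̄( θ(0,z̄) ∧ ∀x(θ(x,z̄) → θ(2x,z̄) ∧ θ(2x+1,z̄)) → ∀x θ(x,z̄) )`, where `2x` is `(1+1)×x`. -/
noncomputable def indPAx {m : ℕ} (θ : Lor.Formula (Fin m ⊕ Fin 1)) : Lor.Sentence :=
  closeAll ((substP θ zeroT ⊓
      allX (θ ⟹ substX θ (mulT twoT xT) ⊓ substX θ (addT (mulT twoT xT) oneT))) ⟹ allX θ)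

/-! ### Theories -/

/-- Peano arithmetic: `PA⁻` plus induction for all `L_OR` formulas. -/
noncomputable def PA : Lor.Theory :=
  PAminus ∪ {σ | ∃ (m : ℕ) (θ : Lor.Formula (Fin m ⊕ Fin 1)), σ = indAx θ}

/-- `IOpen`: `PA⁻` plus induction for all quantifier-free `L_OR` formulas. -/
noncomputable def IOpen : Lor.Theory :=
  PAminus ∪ {σ | ∃ (m : ℕ) (θ : Lor.Formula (Fin m ⊕ Fin 1)), θ.IsQF ∧ σ = indAx θ}

/-! ### Notions of inductiveness

A formula `φ(x)` with exactly one free variable `x` is represented as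
`φ : Lor.Formula (Fin 0 ⊕ Fin 1)` (no parameters). -/

/-- Formulas `φ(x)` with exactly one free variable `x`. -/
abbrev OneVarFormula : Type := Lor.Formula (Fin 0 ⊕ Fin 1)

/-- The sentence `∀x φ(x)`. -/
noncomputable def allS (φ : OneVarFormula) : Lor.Sentence := closeAll (allX φ)

/-- `φ(x)` is inductive: `PA⁻ ⊢ φ(0)` and `PA⁻ ⊢ ∀x(φ(x) → φ(x+1))`. -/
noncomputable def IsInductive (φ : OneVarFormula) : Prop :=
  PAminus ⊨ᵇ closeAll (substP φ zeroT) ∧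
    PAminus ⊨ᵇ closeAll (allX (φ ⟹ substX φ (addT xT oneT)))

/-- `φ(x)` is `<`-inductive: `PA⁻ ⊢ ∀y(∀x<y φ(x) → φ(y))`. -/
noncomputable def IsLtInductive (φ : OneVarFormula) : Prop :=
  PAminus ⊨ᵇ closeAll (allX (allLtX φ ⟹ φ))

/-- `φ(x)` is `(n+1)`-step inductive:
`PA⁻ ⊢ ⋀_{k<n+1} φ(k) ∧ ∀x(φ(x) → φ(x+n+1))`. -/
noncomputable def IsStepInductive (n : ℕ) (φ : OneVarFormula) : Prop :=
  PAminus ⊨ᵇ closeAll (conjNum φ (n + 1) ⊓ allX (φ ⟹ substX φ (addT xT (numT (n + 1)))))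

/-- `φ(x)` is `(n+1)`-inductive:
`PA⁻ ⊢ ⋀_{k<n+1} φ(k) ∧ ∀x(⋀_{k<n+1} φ(x+k) → φ(x+n+1))`. -/
noncomputable def IsKInductive (n : ℕ) (φ : OneVarFormula) : Prop :=
  PAminus ⊨ᵇ
    closeAll (conjNum φ (n + 1) ⊓ allX (conjShift φ (n + 1) ⟹ substX φ (addT xT (numT (n + 1)))))

/-- `φ(x)` is p-inductive (polynomially inductive):
`PA⁻ ⊢ φ(0) ∧ ∀x(φ(x) → φ(2x) ∧ φ(2x+1))`. -/
noncomputable def IsPInductive (φ : OneVarFormula) : Prop :=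
  PAminus ⊨ᵇ closeAll (substP φ zeroT ⊓
    allX (φ ⟹ substX φ (mulT twoT xT) ⊓ substX φ (addT (mulT twoT xT) oneT)))

/-! ### Cuts -/

/-- `φ(x)` is a cut: an inductive formula with `PA⁻ ⊢ ∀x∀y(x<y ∧ φ(y) → φ(x))`. -/
noncomputable def IsCut (φ : OneVarFormula) : Prop :=
  IsInductive φ ∧
    PAminus ⊨ᵇ closeAll
      (ltFml (Term.var (Sum.inr 0) : Lor.Term (Fin 0 ⊕ Fin 2)) (Term.var (Sum.inr 1)) ⊓
          φ.relabel (Sum.elim (fun i => Sum.inl i) fun _ => Sum.inr 1) ⟹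
        φ.relabel (Sum.elim (fun i => Sum.inl i) fun _ => Sum.inr 0))

/-- `φ(x)` is an a-cut: a cut with `PA⁻ ⊢ ∀x(φ(x) → φ(x+x))`. -/
noncomputable def IsACut (φ : OneVarFormula) : Prop :=
  IsCut φ ∧ PAminus ⊨ᵇ closeAll (allX (φ ⟹ substX φ (addT xT xT)))

/-- `φ(x)` is an am-cut: an a-cut with `PA⁻ ⊢ ∀x(φ(x) → φ(x×x))`. -/
noncomputable def IsAMCut (φ : OneVarFormula) : Prop :=
  IsACut φ ∧ PAminus ⊨ᵇ closeAll (allX (φ ⟹ substX φ (mulT xT xT)))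

/-! Both separating formulas speak about the quotient `y` of `x` by `m + 1` and say that `y` is
even or odd. In a model of `PA⁻`, adding `m + 1` to `x` adds `1` to `y`, and a parity of `y` gives
one of `y + 1`; hence "`x` is a multiple of `m + 1`, or `x = (m + 1)y + r` with `0 < r ≤ m` and `y`
has a parity" is `(m + 1)`-step inductive, and "if `x = (m + 1)y` then `y` has a parity" is
`(m + 1)`-inductive.

The countermodel is the nonnegative part of `ℤ[X]` ordered by the sign of the leading coefficient,
in which `X` has no parity. If `m + 1 ∤ n + 1`, write `n + 1 = (m + 1)q + r` with `0 < r ≤ m`: the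
multiple `(m + 1)(X - q)` satisfies the first formula, but adding `n + 1` gives `(m + 1)X + r`,
whose quotient is `X`. If `n < m`, the elements `(m + 1)X - (n + 1) + k` with `k ≤ n` are not
multiples of `m + 1` and satisfy the second formula vacuously, while `(m + 1)X` does not. -/

section Operations

variable {M : Type} [Lor.Structure M]

def zeroM : M := Structure.funMap (L := Lor) LorFunc.zero ![]
def oneM : M := Structure.funMap (L := Lor) LorFunc.one ![]
def addM (a b : M) : M := Structure.funMap (L := Lor) LorFunc.add ![a, b]
def mulM (a b : M) : M := Structure.funMap (L := Lor) LorFunc.mul ![a, b]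
def ltM (a b : M) : Prop := Structure.RelMap (L := Lor) LorRel.lt ![a, b]

def numM : ℕ → M
  | 0 => zeroM
  | k + 1 => addM (numM k) oneM

variable {α : Type}

@[simp] lemma realize_zeroT (v : α → M) : (zeroT : Lor.Term α).realize v = zeroM := by
  simp only [zeroT, Constants.term, Term.realize, zeroM]; congr; subsingleton

@[simp] lemma realize_oneT (v : α → M) : (oneT : Lor.Term α).realize v = oneM := by
  simp only [oneT, Constants.term, Term.realize, oneM]; congr; subsingleton

@[simp] lemma realize_addT (t u : Lor.Term α) (v : α → M) :
    (addT t u).realize v = addM (t.realize v) (u.realize v) :=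
  Term.realize_functions_apply₂

@[simp] lemma realize_mulT (t u : Lor.Term α) (v : α → M) :
    (mulT t u).realize v = mulM (t.realize v) (u.realize v) :=
  Term.realize_functions_apply₂

@[simp] lemma realize_numT (k : ℕ) (v : α → M) : (numT k : Lor.Term α).realize v = numM k := by
  induction k with
  | zero => exact realize_zeroT v
  | succ k ih => simp [numT, numM, ih]

@[simp] lemma realize_ltBF {l : ℕ} (t u : Lor.Term (α ⊕ Fin l)) (v : α → M) (xs : Fin l → M) :
    (ltBF t u).Realize v xs ↔ ltM (t.realize (Sum.elim v xs)) (u.realize (Sum.elim v xs)) :=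
  BoundedFormula.realize_rel₂

end Operations

/-- The axioms (P1)–(P16) of `PAminus`, in order, read in an `L_OR`-structure; (P15) is split
into `zero_lt_one` and `one_le_of_pos`. -/
structure PAminusAxioms (M : Type) [Lor.Structure M] : Prop where
  add_assoc : ∀ a b c : M, addM (addM a b) c = addM a (addM b c)
  add_comm : ∀ a b : M, addM a b = addM b a
  mul_assoc : ∀ a b c : M, mulM (mulM a b) c = mulM a (mulM b c)
  mul_comm : ∀ a b : M, mulM a b = mulM b a
  mul_add : ∀ a b c : M, mulM a (addM b c) = addM (mulM a b) (mulM a c)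
  add_zero : ∀ a : M, addM a zeroM = a
  mul_zero : ∀ a : M, mulM a zeroM = zeroM
  mul_one : ∀ a : M, mulM a oneM = a
  lt_trans : ∀ a b c : M, ltM a b → ltM b c → ltM a c
  lt_irrefl : ∀ a : M, ¬ltM a a
  lt_trichotomy : ∀ a b : M, (ltM a b ∨ a = b) ∨ ltM b a
  add_lt_add_right : ∀ a b c : M, ltM a b → ltM (addM a c) (addM b c)
  mul_lt_mul_right : ∀ a b c : M, c ≠ zeroM → ltM a b → ltM (mulM a c) (mulM b c)
  lt_iff_exists_add_one : ∀ a b : M, ltM a b ↔ ∃ c, addM (addM a c) oneM = b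
  zero_lt_one : ltM (zeroM : M) oneM
  one_le_of_pos : ∀ a : M, ltM zeroM a → ltM oneM a ∨ oneM = a
  zero_le : ∀ a : M, ltM zeroM a ∨ zeroM = a

theorem model_PAminus_iff {M : Type} [Lor.Structure M] : M ⊨ PAminus ↔ PAminusAxioms M := by
  simp only [Theory.model_iff, PAminus, Set.forall_mem_insert, Set.mem_singleton_iff, forall_eq]
  simp [Sentence.Realize, Formula.Realize, Fin.snoc]
  constructor
  · rintro ⟨h₁, h₂, h₃, h₄, h₅, h₆, h₇, h₈, h₉, h₁₀, h₁₁, h₁₂, h₁₃, h₁₄, ⟨h₁₅, h₁₆⟩, h₁₇⟩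
    exact ⟨h₁, h₂, h₃, h₄, h₅, h₆, h₇, h₈, h₉, h₁₀, h₁₁, h₁₂, h₁₃, h₁₄, h₁₅, h₁₆, h₁₇⟩
  · rintro ⟨h₁, h₂, h₃, h₄, h₅, h₆, h₇, h₈, h₉, h₁₀, h₁₁, h₁₂, h₁₃, h₁₄, h₁₅, h₁₆, h₁₇⟩
    exact ⟨h₁, h₂, h₃, h₄, h₅, h₆, h₇, h₈, h₉, h₁₀, h₁₁, h₁₂, h₁₃, h₁₄, ⟨h₁₅, h₁₆⟩, h₁₇⟩

namespace PAminusModel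

variable {M : PAminus.ModelType.{0, 0, 0}}

variable (M) in
theorem axioms : PAminusAxioms M := model_PAminus_iff.1 M.is_model

instance : Zero M := ⟨zeroM⟩
instance : One M := ⟨oneM⟩
instance : Add M := ⟨addM⟩
instance : Mul M := ⟨mulM⟩
instance : NatCast M := ⟨numM⟩

@[simp] lemma zeroM_eq : (zeroM : M) = 0 := rfl
@[simp] lemma oneM_eq : (oneM : M) = 1 := rfl
@[simp] lemma addM_eq (a b : M) : addM a b = a + b := rfl
@[simp] lemma mulM_eq (a b : M) : mulM a b = a * b := rfl
@[simp] lemma numM_eq (k : ℕ) : (numM k : M) = k := rfl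

instance : CommSemiring M where
  add_assoc := (axioms M).add_assoc
  zero_add a := ((axioms M).add_comm _ _).trans ((axioms M).add_zero a)
  add_zero := (axioms M).add_zero
  add_comm := (axioms M).add_comm
  mul_assoc := (axioms M).mul_assoc
  one_mul a := ((axioms M).mul_comm _ _).trans ((axioms M).mul_one a)
  mul_one := (axioms M).mul_one
  mul_comm := (axioms M).mul_comm
  left_distrib := (axioms M).mul_add
  right_distrib a b c := by
    show mulM (addM a b) c = addM (mulM a c) (mulM b c)
    simp only [(axioms M).mul_comm _ c, (axioms M).mul_add]
  zero_mul a := ((axioms M).mul_comm _ _).trans ((axioms M).mul_zero a)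
  mul_zero := (axioms M).mul_zero
  nsmul := nsmulRec
  npow := npowRec
  natCast_zero := rfl
  natCast_succ _ := rfl

noncomputable instance : LinearOrder M where
  lt := ltM
  le a b := ltM a b ∨ a = b
  le_refl a := Or.inr rfl
  le_trans a b c := by
    rintro (hab | rfl) (hbc | rfl)
    exacts [Or.inl ((axioms M).lt_trans _ _ _ hab hbc), Or.inl hab, Or.inl hbc, Or.inr rfl]
  le_antisymm a b := by
    rintro (hab | rfl) (hba | hba)
    exacts [((axioms M).lt_irrefl _ ((axioms M).lt_trans _ _ _ hab hba)).elim, hba.symm, rfl, rfl]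
  lt_iff_le_not_ge a b := by
    refine ⟨fun h => ⟨Or.inl h, ?_⟩, ?_⟩
    · rintro (h' | rfl)
      exacts [(axioms M).lt_irrefl _ ((axioms M).lt_trans _ _ _ h h'), (axioms M).lt_irrefl _ h]
    · rintro ⟨h | rfl, h'⟩
      exacts [h, (h' (Or.inr rfl)).elim]
  le_total a b := by
    rcases (axioms M).lt_trichotomy a b with (h | h) | h
    exacts [Or.inl (Or.inl h), Or.inl (Or.inr h), Or.inr (Or.inl h)]
  toDecidableLE := Classical.decRel _

@[simp] lemma ltM_eq (a b : M) : ltM a b ↔ a < b := Iff.rfl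

theorem lt_iff_exists_add_one {a b : M} : a < b ↔ ∃ c, a + c + 1 = b :=
  (axioms M).lt_iff_exists_add_one a b

theorem one_le_of_pos {a : M} (h : 0 < a) : 1 ≤ a :=
  (axioms M).one_le_of_pos a h

theorem nonneg (a : M) : 0 ≤ a :=
  (axioms M).zero_le a

instance : IsStrictOrderedRing M where
  add_le_add_left a b hab c := by
    rcases hab with h | rfl
    exacts [Or.inl (by simpa [add_comm c] using (axioms M).add_lt_add_right _ _ c h), Or.inr rfl]
  le_of_add_le_add_left a b c h := by
    contrapose! h
    simpa [add_comm a] using (axioms M).add_lt_add_right _ _ a h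
  zero_le_one := Or.inl (axioms M).zero_lt_one
  exists_pair_ne := ⟨0, 1, (show (0 : M) < 1 from (axioms M).zero_lt_one).ne⟩
  mul_lt_mul_of_pos_left a ha b c hbc := by
    simpa [mul_comm a] using (axioms M).mul_lt_mul_right _ _ a ha.ne' hbc
  mul_lt_mul_of_pos_right a ha b c hbc := (axioms M).mul_lt_mul_right _ _ a ha.ne' hbc

instance : CanonicallyOrderedAdd M where
  exists_add_of_le {a b} := by
    rintro (h | rfl)
    · obtain ⟨c, rfl⟩ := lt_iff_exists_add_one.1 h
      exact ⟨c + 1, add_assoc _ _ _⟩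
    · exact ⟨0, (add_zero a).symm⟩
  le_add_self a b := by simpa using add_le_add_right (nonneg b) a
  le_self_add a b := by simpa using add_le_add_left (nonneg b) a

end PAminusModel

section NonnegModel

variable {R : Type} [CommRing R] [LinearOrder R] [IsStrictOrderedRing R]

instance : Lor.Structure {x : R // 0 ≤ x} where
  funMap
    | .zero, _ => 0
    | .one, _ => 1
    | .add, x => x 0 + x 1
    | .mul, x => x 0 * x 1
  RelMap
    | .lt, x => x 0 < x 1

namespace Nonneg

variable {a b : {x : R // 0 ≤ x}}

@[simp] lemma zeroM_eq : (zeroM : {x : R // 0 ≤ x}) = 0 := rfl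
@[simp] lemma oneM_eq : (oneM : {x : R // 0 ≤ x}) = 1 := rfl
@[simp] lemma addM_eq : addM a b = a + b := rfl
@[simp] lemma mulM_eq : mulM a b = a * b := rfl
@[simp] lemma ltM_iff : ltM a b ↔ a < b := Iff.rfl
@[simp] lemma numM_eq (k : ℕ) : (numM k : {x : R // 0 ≤ x}) = k := by
  induction k with
  | zero => simp [numM]
  | succ k ih => simp [numM, ih]

end Nonneg

theorem model_PAminus_nonneg (hdisc : ∀ x : R, 0 < x → 1 ≤ x) : PAminus.Model {x : R // 0 ≤ x} := by
  refine model_PAminus_iff.2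
    { add_assoc := add_assoc
      add_comm := add_comm
      mul_assoc := mul_assoc
      mul_comm := mul_comm
      mul_add := mul_add
      add_zero := add_zero
      mul_zero := mul_zero
      mul_one := mul_one
      lt_trans := fun _ _ _ => lt_trans
      lt_irrefl := lt_irrefl
      lt_trichotomy := fun a b => (lt_trichotomy a b).elim (Or.inl ∘ Or.inl) (·.imp Or.inr id)
      add_lt_add_right := fun a b c h => add_lt_add_left h c
      mul_lt_mul_right := fun a b c hc h => mul_lt_mul_of_pos_right h (pos_iff_ne_zero.2 hc)
      lt_iff_exists_add_one := fun a b => ?_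
      zero_lt_one := zero_lt_one (α := {x : R // 0 ≤ x})
      one_le_of_pos := fun a ha => ?_
      zero_le := fun a => (show 0 ≤ a from zero_le).lt_or_eq }
  · simp only [Nonneg.ltM_iff, Nonneg.addM_eq, Nonneg.oneM_eq]
    constructor
    · intro h
      have : (1 : R) ≤ b - a := hdisc _ (sub_pos.2 h)
      refine ⟨⟨b - a - 1, sub_nonneg.2 this⟩, Subtype.ext ?_⟩
      simp only [Nonneg.coe_add, Nonneg.coe_one]
      ring
    · rintro ⟨c, rfl⟩
      rw [add_assoc]
      exact lt_add_of_pos_right a (add_pos_of_nonneg_of_pos zero_le zero_lt_one)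
  · exact ((show (1 : R) ≤ a from hdisc a ha)).lt_or_eq.imp id (Subtype.ext ·)

end NonnegModel

theorem exists_eq_natCast_of_le_natCast {R : Type} [Ring R] [LinearOrder R]
    [IsStrictOrderedRing R] (hdisc : ∀ x : R, 0 < x → 1 ≤ x) {r : R} (h0 : 0 ≤ r) {k : ℕ}
    (hk : r ≤ k) : ∃ j ≤ k, r = j := by
  induction k with
  | zero => exact ⟨0, le_rfl, by rw [Nat.cast_zero]; exact le_antisymm (by simpa using hk) h0⟩
  | succ k ih =>
    rcases hk.lt_or_eq with hk | hk
    · obtain ⟨j, hj, rfl⟩ := ih (by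
        have := le_sub_iff_add_le.1 (hdisc _ (sub_pos.2 hk))
        rwa [Nat.cast_succ, add_comm 1, add_le_add_iff_right] at this)
      exact ⟨j, hj.trans k.le_succ, rfl⟩
    · exact ⟨k + 1, le_rfl, hk⟩

section Semantics

theorem models_closeAll_iff {T : Lor.Theory} {α : Type} [Finite α] {φ : Lor.Formula α} :
    T ⊨ᵇ closeAll φ ↔ ∀ (M : T.ModelType.{0, 0, 0}) (v : α → M), φ.Realize v := by
  refine forall_congr' fun M => ?_
  simp [closeAll, BoundedFormula.realize_iAlls, Formula.realize_relabel, Function.comp_def]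

theorem eq_const_of_oneVar {M : Type} (w : Fin 0 ⊕ Fin 1 → M) : w = fun _ => w (Sum.inr 0) :=
  funext fun a => by
    rcases a with i | i
    exacts [i.elim0, congrArg _ (congrArg _ (Subsingleton.elim _ _))]

variable {M : Type} [Lor.Structure M] {φ : OneVarFormula}

theorem realize_allX (v : Fin 0 → M) : (allX φ).Realize v ↔ ∀ x : M, φ.Realize fun _ => x := by
  rw [allX, Formula.realize_iAlls]
  refine ⟨fun h x => ?_, fun h i => ?_⟩
  · have hx := h fun _ => x
    rwa [eq_const_of_oneVar (fun a => Sum.elim v _ a)] at hx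
  · rw [eq_const_of_oneVar (fun a => Sum.elim v i a)]; exact h _

theorem realize_substX (t : Lor.Term (Fin 0 ⊕ Fin 1)) (x : M) :
    (substX φ t).Realize (fun _ => x) ↔ φ.Realize fun _ => t.realize fun _ => x := by
  rw [substX, Formula.Realize, BoundedFormula.realize_subst, eq_const_of_oneVar (fun a => _)]
  rfl

theorem realize_substP (t : Lor.Term (Fin 0)) (v : Fin 0 → M) :
    (substP φ t).Realize v ↔ φ.Realize fun _ => t.realize v := by
  rw [substP, Formula.Realize, BoundedFormula.realize_subst, eq_const_of_oneVar (fun a => _)]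
  rfl

theorem realize_conjNum (j : ℕ) (v : Fin 0 → M) :
    (conjNum φ j).Realize v ↔ ∀ k < j, φ.Realize fun _ => (numM k : M) := by
  induction j with
  | zero => simp [conjNum]
  | succ j ih => simp [conjNum, ih, realize_substP, Nat.le_iff_lt_or_eq, or_imp, forall_and]

theorem realize_conjShift (j : ℕ) (x : M) :
    (conjShift φ j).Realize (fun _ => x) ↔ ∀ k < j, φ.Realize fun _ => addM x (numM k) := by
  induction j with
  | zero => simp [conjShift]
  | succ j ih =>
    simp [conjShift, ih, realize_substX, xT, Nat.le_iff_lt_or_eq, or_imp, forall_and]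

end Semantics

theorem isStepInductive_iff {n : ℕ} {φ : OneVarFormula} : IsStepInductive n φ ↔
    ∀ M : PAminus.ModelType.{0, 0, 0}, (∀ k < n + 1, φ.Realize fun _ => (numM k : M)) ∧
      ∀ x : M, φ.Realize (fun _ => x) → φ.Realize fun _ => addM x (numM (n + 1)) := by
  rw [IsStepInductive, models_closeAll_iff]
  refine forall_congr' fun M => ?_
  simp [realize_conjNum, realize_allX, realize_substX, xT]

theorem isKInductive_iff {n : ℕ} {φ : OneVarFormula} : IsKInductive n φ ↔
    ∀ M : PAminus.ModelType.{0, 0, 0}, (∀ k < n + 1, φ.Realize fun _ => (numM k : M)) ∧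
      ∀ x : M, (∀ k < n + 1, φ.Realize fun _ => addM x (numM k)) →
        φ.Realize fun _ => addM x (numM (n + 1)) := by
  rw [IsKInductive, models_closeAll_iff]
  refine forall_congr' fun M => ?_
  simp [realize_conjNum, realize_conjShift, realize_allX, realize_substX, xT]

section Models

variable {M : Type} [Lor.Structure M] [PAminus.Model M] [Nonempty M] {n : ℕ} {φ : OneVarFormula}

theorem IsStepInductive.realize_add_numM (h : IsStepInductive n φ) {x : M}
    (hx : φ.Realize fun _ => x) : φ.Realize fun _ => addM x (numM (n + 1)) :=
  (isStepInductive_iff.1 h (.of PAminus M)).2 x hx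

theorem IsKInductive.realize_add_numM (h : IsKInductive n φ) {x : M}
    (hx : ∀ k < n + 1, φ.Realize fun _ => addM x (numM k)) :
    φ.Realize fun _ => addM x (numM (n + 1)) :=
  (isKInductive_iff.1 h (.of PAminus M)).2 x hx

end Models

def HasParity {M : Type} [Add M] [One M] (y : M) : Prop := ∃ z, y = z + z ∨ y = z + z + 1

theorem hasParity_zero {M : Type} [AddMonoid M] [One M] : HasParity (0 : M) :=
  ⟨0, Or.inl (add_zero 0).symm⟩

theorem HasParity.add_one {M : Type} [CommSemiring M] {y : M} : HasParity y → HasParity (y + 1)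
  | ⟨z, .inl h⟩ => ⟨z, .inr (h ▸ rfl)⟩
  | ⟨z, .inr h⟩ => ⟨z + 1, .inl (by rw [h]; ring)⟩

theorem HasParity.map {M N F : Type} [Add M] [One M] [Add N] [One N] [FunLike F M N]
    [AddHomClass F M N] [OneHomClass F M N] (f : F) {y : M} : HasParity y → HasParity (f y)
  | ⟨z, h⟩ => ⟨f z, by rcases h with rfl | rfl <;> simp⟩

def parityBF {k : ℕ} (y z : Lor.Term ((Fin 0 ⊕ Fin 1) ⊕ Fin k)) :
    Lor.BoundedFormula (Fin 0 ⊕ Fin 1) k :=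
  (y =' addT z z) ⊔ (y =' addT (addT z z) oneT)

def xBoundedT {k : ℕ} : Lor.Term ((Fin 0 ⊕ Fin 1) ⊕ Fin k) := Term.var (Sum.inl (Sum.inr 0))

def multipleOrQuotientHasParity (m : ℕ) : OneVarFormula :=
  (∃' (xBoundedT =' mulT (numT (m + 1)) &0)) ⊔
    ∃' ∃' ∃' ((xBoundedT =' addT (mulT (numT (m + 1)) &0) &1) ⊓ ltBF zeroT &1 ⊓
      (ltBF &1 (numT m) ⊔ (&1 =' numT m)) ⊓ parityBF &0 &2)

def quotientHasParity (m : ℕ) : OneVarFormula :=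
  ∀' ((xBoundedT =' mulT (numT (m + 1)) &0) ⟹ ∃' parityBF &0 &1)

section

variable {M : Type} [Lor.Structure M] (m : ℕ) (x : M)

theorem realize_multipleOrQuotientHasParity :
    (multipleOrQuotientHasParity m).Realize (fun _ => x) ↔
      (∃ y, x = mulM (numM (m + 1)) y) ∨
        ∃ y r, x = addM (mulM (numM (m + 1)) y) r ∧ ltM zeroM r ∧
          (ltM r (numM m) ∨ r = numM m) ∧ ∃ z, y = addM z z ∨ y = addM (addM z z) oneM := by
  simp [multipleOrQuotientHasParity, parityBF, xBoundedT, Formula.Realize, Fin.snoc, and_assoc]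

theorem realize_quotientHasParity :
    (quotientHasParity m).Realize (fun _ => x) ↔
      ∀ y, x = mulM (numM (m + 1)) y → ∃ z, y = addM z z ∨ y = addM (addM z z) oneM := by
  simp [quotientHasParity, parityBF, xBoundedT, Formula.Realize, Fin.snoc]

end

section Positive

open PAminusModel

theorem isStepInductive_multipleOrQuotientHasParity (m : ℕ) :
    IsStepInductive m (multipleOrQuotientHasParity m) := by
  refine isStepInductive_iff.2 fun M => ?_
  simp only [realize_multipleOrQuotientHasParity, addM_eq, mulM_eq, zeroM_eq, oneM_eq, numM_eq,
    ltM_eq, ← le_iff_lt_or_eq]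
  refine ⟨fun k hk => ?_, fun x hx => ?_⟩
  · rcases k with _ | k
    · exact Or.inl ⟨0, by simp⟩
    · exact Or.inr ⟨0, k + 1, by simp, Nat.cast_pos.2 k.succ_pos,
        Nat.cast_le.2 (show k + 1 ≤ m by omega), hasParity_zero⟩
  · rcases hx with ⟨y, rfl⟩ | ⟨y, r, rfl, hr, hrm, hy⟩
    · exact Or.inl ⟨y + 1, by push_cast; ring⟩
    · exact Or.inr ⟨y + 1, r, by push_cast; ring, hr, hrm, HasParity.add_one hy⟩

theorem isKInductive_quotientHasParity (m : ℕ) : IsKInductive m (quotientHasParity m) := by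
  refine isKInductive_iff.2 fun M => ?_
  simp only [realize_quotientHasParity, addM_eq, mulM_eq, oneM_eq, numM_eq]
  refine ⟨fun k hk y hy => ?_, fun x hx y hy => ?_⟩
  · suffices y = 0 from this ▸ hasParity_zero
    by_contra hy0
    have : ((m + 1 : ℕ) : M) ≤ k := hy ▸ le_mul_of_one_le_right (Nat.cast_nonneg _)
      (one_le_of_pos (pos_iff_ne_zero.2 hy0))
    exact absurd (Nat.cast_le.1 this) (by omega)
  · have hy0 : y ≠ 0 := by
      rintro rfl
      simp at hy
    obtain ⟨y, rfl⟩ := exists_add_of_le (one_le_of_pos (pos_iff_ne_zero.2 hy0))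
    have hx' : x = (m + 1) * y := add_right_cancel (b := (m + 1 : M)) <| by
      push_cast at hy
      rw [hy]; ring
    rw [add_comm]
    exact HasParity.add_one (hx 0 m.succ_pos y (by simpa using hx'))

end Positive

open Polynomial in
theorem Polynomial.leadingCoeff_add_nonneg {R : Type} [CommRing R] [LinearOrder R]
    [IsStrictOrderedRing R] {p q : R[X]} (hp : 0 ≤ p.leadingCoeff) (hq : 0 ≤ q.leadingCoeff) :
    0 ≤ (p + q).leadingCoeff := by
  rcases lt_trichotomy p.degree q.degree with h | h | h
  · rwa [leadingCoeff_add_of_degree_lt h]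
  · by_cases hpq : p.leadingCoeff + q.leadingCoeff = 0
    · obtain ⟨rfl, rfl⟩ : p = 0 ∧ q = 0 := by
        simpa [leadingCoeff_eq_zero] using (add_eq_zero_iff_of_nonneg hp hq).1 hpq
      simp
    · rw [leadingCoeff_add_of_degree_eq h hpq]
      exact add_nonneg hp hq
  · rwa [leadingCoeff_add_of_degree_lt' h]

/-- `ℤ[X]` ordered by the sign of the leading coefficient (see `nonnegCone`): a discretely
ordered ring in which `X` exceeds every integer. -/
def OrderedIntPoly : Type := Polynomial ℤ

namespace OrderedIntPoly

open Polynomial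

noncomputable instance : CommRing OrderedIntPoly := inferInstanceAs (CommRing ℤ[X])
instance : IsDomain OrderedIntPoly := inferInstanceAs (IsDomain ℤ[X])

noncomputable def toPoly : OrderedIntPoly ≃+* ℤ[X] := RingEquiv.refl _

def nonnegCone : RingCone OrderedIntPoly where
  carrier := {p | 0 ≤ (toPoly p).leadingCoeff}
  add_mem' hp hq := by simpa using leadingCoeff_add_nonneg hp hq
  zero_mem' := by simp
  mul_mem' hp hq := by simpa [leadingCoeff_mul] using mul_nonneg hp hq
  one_mem' := by simp
  eq_zero_of_mem_of_neg_mem' {p} hp hnp := by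
    simp only [Set.mem_ofPred_eq, map_neg, leadingCoeff_neg, Left.nonneg_neg_iff] at hp hnp
    exact toPoly.injective (by simpa using leadingCoeff_eq_zero.1 (le_antisymm hnp hp))

instance : HasMemOrNegMem nonnegCone where
  mem_or_neg_mem p := by
    simp only [nonnegCone, RingCone.mem_mk, Subsemiring.mem_mk, Submonoid.mem_mk,
      Subsemigroup.mem_mk, Set.mem_ofPred_eq, map_neg, leadingCoeff_neg, Left.nonneg_neg_iff]
    exact le_total _ _

noncomputable instance : LinearOrder OrderedIntPoly :=
  have := Classical.decPred (· ∈ nonnegCone)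
  LinearOrder.mkOfAddGroupCone nonnegCone

instance : IsStrictOrderedRing OrderedIntPoly :=
  have := IsOrderedRing.mkOfCone nonnegCone
  IsOrderedRing.toIsStrictOrderedRing _

theorem nonneg_iff {p : OrderedIntPoly} : 0 ≤ p ↔ 0 ≤ (toPoly p).leadingCoeff := by
  show (p - 0) ∈ nonnegCone ↔ _
  rw [sub_zero]; rfl

theorem pos_iff {p : OrderedIntPoly} : 0 < p ↔ 0 < (toPoly p).leadingCoeff := by
  rw [lt_iff_le_and_ne, nonneg_iff, lt_iff_le_and_ne, ne_comm, ne_comm (a := (0 : ℤ)),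
    Ne, Ne, leadingCoeff_eq_zero, map_eq_zero_iff _ toPoly.injective]

theorem one_le_of_pos {p : OrderedIntPoly} (hp : 0 < p) : 1 ≤ p := by
  rw [pos_iff] at hp
  rw [← sub_nonneg, nonneg_iff, map_sub, map_one]
  rcases Nat.eq_zero_or_pos (toPoly p).natDegree with h | h
  · rw [eq_C_of_natDegree_eq_zero h, leadingCoeff_C] at hp
    rw [eq_C_of_natDegree_eq_zero h, ← C_1, ← C_sub, leadingCoeff_C]
    omega
  · rw [leadingCoeff_sub_of_degree_lt]
    · exact hp.le
    rw [degree_one]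
    exact natDegree_pos_iff_degree_pos.1 h

noncomputable def X : OrderedIntPoly := toPoly.symm Polynomial.X

@[simp] lemma toPoly_X : toPoly X = Polynomial.X := toPoly.apply_symm_apply _

theorem intCast_lt_X (c : ℤ) : (c : OrderedIntPoly) < X := by
  rw [← sub_pos, pos_iff, map_sub, toPoly_X, map_intCast, ← C_eq_intCast, leadingCoeff_X_sub_C]
  exact one_pos

theorem not_hasParity_X : ¬HasParity X := by
  rintro ⟨z, h | h⟩ <;>
  · have h1 := congrArg (fun p => (toPoly p).coeff 1) h
    simp only [toPoly_X, coeff_X_one, map_add, map_one, coeff_add, coeff_one] at h1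
    omega

theorem eq_and_eq_of_natCast_mul_add_intCast_eq {d : ℕ} {y z : OrderedIntPoly} {i j : ℤ}
    (h : (d : OrderedIntPoly) * y + i = d * z + j) (hij : |i - j| < d) : y = z ∧ i = j := by
  obtain rfl : i = j := by
    -- the constant coefficients give `d ∣ i - j`
    have h0 := congrArg (fun p => (toPoly p).coeff 0) h
    simp only [map_add, map_mul, map_natCast, map_intCast, coeff_add, mul_coeff_zero,
      coeff_natCast_ite, if_pos, intCast_coeff_zero, Int.cast_eq] at h0
    exact sub_eq_zero.1 (Int.eq_zero_of_abs_lt_dvd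
      ⟨(toPoly z).coeff 0 - (toPoly y).coeff 0, by linear_combination h0⟩ hij)
  refine ⟨mul_left_cancel₀ (Nat.cast_ne_zero.2 ?_) (add_right_cancel h), rfl⟩
  rintro rfl
  simp at hij

end OrderedIntPoly

abbrev NonnegIntPoly : Type := {p : OrderedIntPoly // 0 ≤ p}

instance : PAminus.Model NonnegIntPoly :=
  model_PAminus_nonneg fun _ => OrderedIntPoly.one_le_of_pos

open OrderedIntPoly in
theorem not_isStepInductive_multipleOrQuotientHasParity {m n : ℕ} (hmn : ¬(m + 1) ∣ (n + 1)) :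
    ¬IsStepInductive n (multipleOrQuotientHasParity m) := by
  intro hI
  set q := (n + 1) / (m + 1)
  set r := (n + 1) % (m + 1)
  have hqr : ((n + 1 : ℕ) : OrderedIntPoly) = (m + 1 : ℕ) * q + r := by
    exact_mod_cast (Nat.div_add_mod (n + 1) (m + 1)).symm
  have hr0 : 0 < r := Nat.pos_of_ne_zero (mt Nat.dvd_of_mod_eq_zero hmn)
  have hrm : r < m + 1 := Nat.mod_lt _ m.succ_pos
  let y₀ : NonnegIntPoly := ⟨X - q, sub_nonneg.2 (by exact_mod_cast (intCast_lt_X q).le)⟩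
  have hstep := hI.realize_add_numM (x := ((m + 1 : ℕ) : NonnegIntPoly) * y₀) (by
    rw [realize_multipleOrQuotientHasParity]
    exact Or.inl ⟨y₀, by simp⟩)
  simp only [realize_multipleOrQuotientHasParity, Nonneg.addM_eq, Nonneg.mulM_eq,
    Nonneg.zeroM_eq, Nonneg.oneM_eq, Nonneg.numM_eq, Nonneg.ltM_iff, ← le_iff_lt_or_eq] at hstep
  rcases hstep with ⟨y, hy⟩ | ⟨y, j, hy, -, hjm, hpar⟩
  · have h : ((m + 1 : ℕ) : OrderedIntPoly) * X + ((r : ℤ) : OrderedIntPoly) =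
        (m + 1 : ℕ) * (y : OrderedIntPoly) + ((0 : ℤ) : OrderedIntPoly) := by
      have := congrArg Subtype.val hy
      push_cast [y₀] at this hqr ⊢
      linear_combination this - hqr
    have := (eq_and_eq_of_natCast_mul_add_intCast_eq h (by simpa using hrm)).2
    omega
  · obtain ⟨j, hj, hjj⟩ := exists_eq_natCast_of_le_natCast (fun _ => one_le_of_pos) j.2
      (by simpa using Subtype.coe_le_coe.2 hjm)
    have h : ((m + 1 : ℕ) : OrderedIntPoly) * X + ((r : ℤ) : OrderedIntPoly) =
        (m + 1 : ℕ) * (y : OrderedIntPoly) + ((j : ℤ) : OrderedIntPoly) := by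
      have := congrArg Subtype.val hy
      push_cast [y₀, hjj] at this hqr ⊢
      linear_combination this - hqr
    have hX := (eq_and_eq_of_natCast_mul_add_intCast_eq h (by rw [abs_lt]; omega)).1
    exact not_hasParity_X (hX ▸ HasParity.map Nonneg.coeRingHom hpar)

open OrderedIntPoly in
theorem not_isKInductive_quotientHasParity {m n : ℕ} (hmn : n < m) :
    ¬IsKInductive n (quotientHasParity m) := by
  intro hI
  have hX : (0 : OrderedIntPoly) ≤ X := by exact_mod_cast (intCast_lt_X 0).le
  let a : NonnegIntPoly := ⟨(m + 1 : ℕ) * X - (n + 1 : ℕ), sub_nonneg.2 <| by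
    calc ((n + 1 : ℕ) : OrderedIntPoly) ≤ X := by exact_mod_cast (intCast_lt_X (n + 1)).le
      _ ≤ (m + 1 : ℕ) * X := le_mul_of_one_le_left hX (by simp)⟩
  have hwindow : ∀ k < n + 1, (quotientHasParity m).Realize fun _ => addM a (numM k) := by
    intro k hk
    simp only [realize_quotientHasParity, Nonneg.addM_eq, Nonneg.mulM_eq, Nonneg.oneM_eq,
      Nonneg.numM_eq]
    intro y hy
    have h : ((m + 1 : ℕ) : OrderedIntPoly) * X + ((k - (n + 1) : ℤ) : OrderedIntPoly) =
        (m + 1 : ℕ) * (y : OrderedIntPoly) + ((0 : ℤ) : OrderedIntPoly) := by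
      have := congrArg Subtype.val hy
      push_cast [a] at this ⊢
      linear_combination this
    have := (eq_and_eq_of_natCast_mul_add_intCast_eq h (by rw [abs_lt]; omega)).2
    omega
  have hpar := hI.realize_add_numM hwindow
  simp only [realize_quotientHasParity, Nonneg.addM_eq, Nonneg.mulM_eq, Nonneg.oneM_eq,
    Nonneg.numM_eq] at hpar
  exact not_hasParity_X (HasParity.map Nonneg.coeRingHom
    (hpar ⟨X, hX⟩ (Subtype.ext (by push_cast [a]; ring))))

/-- (1) If `m+1` does not divide `n+1`, then there is an `(m+1)`-step inductive formula
that is not `(n+1)`-step inductive. (2) If `m > n`, then there is an `(m+1)`-inductive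
formula that is not `(n+1)`-inductive. -/
theorem stmt15 (m n : ℕ) :
    (¬(m + 1) ∣ (n + 1) →
        ∃ φ : OneVarFormula, IsStepInductive m φ ∧ ¬IsStepInductive n φ) ∧
      (m > n → ∃ φ : OneVarFormula, IsKInductive m φ ∧ ¬IsKInductive n φ) :=
  ⟨fun hmn => ⟨_, isStepInductive_multipleOrQuotientHasParity m,
      not_isStepInductive_multipleOrQuotientHasParity hmn⟩,
    fun hmn => ⟨_, isKInductive_quotientHasParity m, not_isKInductive_quotientHasParity hmn⟩⟩
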